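/- Let A = {−1,1} and let r > 4 be even, and set m = ⌊(3r−4)/4⌋. Define ℓ(r) = binom(r, (r−2)/2) if r ≡ 2 (mod 4) and ℓ(r) = binom(r, r/2)/2 if r ≡ 0 (mod 4). Then η_A(C_3^r) ≥ Σ binom(r, j) + ℓ(r) + 1, where the sum is over odd j with 1 ≤ j ≤ m. -/

import Mathlib

/-- A multiset `S` over an additive abelian group `G` has an `A`-zero-sum subsequence
of length `k`, for the weight set `A = {-1, 1}`: there is a sub-multiset of `S` of
cardinality `k` that splits as `t₁ + t₂` with `t₁.sum - t₂.sum = 0` (the elements of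
`t₁` receive the weight `+1` and those of `t₂` the weight `-1`). -/
def HasWZSS {G : Type*} [AddCommGroup G] (S : Multiset G) (k : ℕ) : Prop :=
  ∃ t₁ t₂ : Multiset G, t₁ + t₂ ≤ S ∧ Multiset.card (t₁ + t₂) = k ∧ t₁.sum = t₂.sum

/-- `sA G` is the smallest `ℓ` such that every sequence over `G` of length at least `ℓ`
has an `{-1,1}`-zero-sum subsequence of length `exp G`. -/
noncomputable def sA (G : Type*) [AddCommGroup G] : ℕ :=
  sInf {ℓ : ℕ | ∀ S : Multiset G, ℓ ≤ Multiset.card S →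
    HasWZSS S (AddMonoid.exponent G)}

/-- `etaA G` is the smallest `ℓ` such that every sequence over `G` of length at least `ℓ`
has a nonempty `{-1,1}`-zero-sum subsequence of length at most `exp G`. -/
noncomputable def etaA (G : Type*) [AddCommGroup G] : ℕ :=
  sInf {ℓ : ℕ | ∀ S : Multiset G, ℓ ≤ Multiset.card S →
    ∃ k, 1 ≤ k ∧ k ≤ AddMonoid.exponent G ∧ HasWZSS S k}

/-- `gA G` is the smallest `ℓ` such that every sequence over `G` of length at least `ℓ`
consisting of pairwise distinct elements has an `{-1,1}`-zero-sum subsequence of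
length `exp G`. -/
noncomputable def gA (G : Type*) [AddCommGroup G] : ℕ :=
  sInf {ℓ : ℕ | ∀ S : Multiset G, ℓ ≤ Multiset.card S → S.Nodup →
    HasWZSS S (AddMonoid.exponent G)}

/-!
The bound is witnessed by an explicit set `S ⊆ C₃^r` with no nonempty `{±1}`-weighted zero sum of
length at most 3: the indicator vectors `ind J` of the odd sets `J` with `|J| ≤ m`, together with
the sign vectors `sgn K` (equal to `-1` exactly on `K`) for `K` in a family `F` of `d`-sets
containing no two complementary sets, where `d = (r - 2)/2` if `r ≡ 2 (mod 4)` and otherwise `F`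
consists of the `r/2`-sets through a fixed coordinate. Since the terms of a short subsequence are
distinct, a weighted zero sum has one of the shapes `x = 0`, `x + y = 0`, `x + y + z = 0` or
`x + y = z`, and `-sgn K = sgn Kᶜ`. Read coordinatewise, each such relation becomes a set identity
(for instance `ind J + ind K + sgn L = 0` forces `J ∪ K = univ` and `J ∩ K = Lᶜ`), which a
cardinality or parity count rules out. A sequence of length `|S|` without short zero sums gives
`η_A > |S|`.
-/

open Finset

theorem AddMonoid.exponent_pi_zmod {ι : Type*} [Fintype ι] [Nonempty ι] (n : ℕ) :
    AddMonoid.exponent (ι → ZMod n) = n := by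
  rw [AddMonoid.exponent_pi, ZMod.exponent]
  exact dvd_antisymm (lcm_dvd fun _ _ => dvd_rfl) (dvd_lcm (mem_univ (Classical.arbitrary ι)))

theorem Finset.two_mul_card_filter_mem_powersetCard_univ {ι : Type*} [Fintype ι]
    [DecidableEq ι] (i₀ : ι) {d : ℕ} (hdι : 2 * d = Fintype.card ι) :
    2 * #((powersetCard d (univ : Finset ι)).filter (i₀ ∈ ·)) = (Fintype.card ι).choose d := by
  have hcompl (K : Finset ι) : #Kᶜ = d ↔ #K = d := by
    rw [card_compl]
    have := card_le_univ K
    omega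
  have hswap : #((powersetCard d univ).filter (i₀ ∈ ·)) =
      #((powersetCard d univ).filter (i₀ ∉ ·)) := by
    refine card_nbij' compl compl ?_ ?_ (fun K _ => compl_compl K) (fun K _ => compl_compl K) <;>
      intro K <;> simp [mem_powersetCard, hcompl]
  rw [two_mul]
  nth_rw 2 [hswap]
  rw [card_filter_add_card_filter_not, card_powersetCard, card_univ]

section ZeroSums

variable {G : Type*} [AddCommGroup G]

theorem hasWZSS_two_of_not_nodup {S : Multiset G} (hS : ¬ S.Nodup) : HasWZSS S 2 := by
  classical
  obtain ⟨a, ha⟩ : ∃ a, 1 < S.count a := by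
    simpa [Multiset.nodup_iff_count_le_one] using hS
  exact ⟨{a}, {a}, Multiset.le_count_iff_replicate_le.1 ha, rfl, rfl⟩

theorem card_add_one_le_etaA [Finite G] [Nontrivial G] (S : Multiset G)
    (hS : ∀ k, 1 ≤ k → k ≤ AddMonoid.exponent G → ¬ HasWZSS S k) :
    Multiset.card S + 1 ≤ etaA G := by
  classical
  cases nonempty_fintype G
  -- `etaA G` is not the junk value `sInf ∅ = 0`: by pigeonhole, a sequence longer than `G`
  -- repeats some term `a`, and `a - a = 0`.
  have hne : Fintype.card G + 1 ∈ {ℓ : ℕ | ∀ T : Multiset G, ℓ ≤ Multiset.card T →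
      ∃ k, 1 ≤ k ∧ k ≤ AddMonoid.exponent G ∧ HasWZSS T k} := by
    refine fun T hT => ⟨2, one_le_two, AddMonoid.one_lt_exponent, hasWZSS_two_of_not_nodup ?_⟩
    intro hnd
    have := (Multiset.toFinset_card_of_nodup hnd) ▸ T.toFinset.card_le_univ
    omega
  refine le_csInf ⟨_, hne⟩ fun ℓ hℓ => ?_
  by_contra! hlt
  obtain ⟨k, hk, hkG, hkS⟩ := hℓ S (by omega)
  exact hS k hk hkG hkS

theorem not_hasWZSS_of_forall {S : Finset G} (hx : ∀ x ∈ S, x ≠ 0)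
    (hxy : ∀ x ∈ S, ∀ y ∈ S, x ≠ y → x + y ≠ 0)
    (hxyz : ∀ x ∈ S, ∀ y ∈ S, ∀ z ∈ S, x ≠ y → x + y + z ≠ 0)
    (hxy_z : ∀ x ∈ S, ∀ y ∈ S, ∀ z ∈ S, x ≠ y → x + y ≠ z)
    {k : ℕ} (hk : 1 ≤ k) (hk3 : k ≤ 3) : ¬ HasWZSS S.val k := by
  rintro ⟨t₁, t₂, hle, hcard, hsum⟩
  wlog h : Multiset.card t₂ ≤ Multiset.card t₁ generalizing t₁ t₂
  · exact this t₂ t₁ (by rwa [add_comm]) (by rwa [add_comm]) hsum.symm (by omega)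
  have hnd : (t₁ + t₂).Nodup := Multiset.nodup_of_le hle S.nodup
  have hS : ∀ x ∈ t₁ + t₂, x ∈ S := fun x hx => Multiset.mem_of_le hle hx
  rw [Multiset.card_add] at hcard
  obtain h₂ | h₂ : Multiset.card t₂ = 0 ∨ Multiset.card t₂ = 1 := by omega
  · obtain rfl := Multiset.card_eq_zero.1 h₂
    obtain h₁ | h₁ | h₁ : Multiset.card t₁ = 1 ∨ Multiset.card t₁ = 2 ∨ Multiset.card t₁ = 3 := by
      omega
    · obtain ⟨a, rfl⟩ := Multiset.card_eq_one.1 h₁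
      simp_all
    · obtain ⟨a, b, rfl⟩ := Multiset.card_eq_two.1 h₁
      simp_all
    · obtain ⟨a, b, c, rfl⟩ := Multiset.card_eq_three.1 h₁
      simp_all [add_assoc]
  · obtain ⟨c, rfl⟩ := Multiset.card_eq_one.1 h₂
    obtain h₁ | h₁ : Multiset.card t₁ = 1 ∨ Multiset.card t₁ = 2 := by omega
    · obtain ⟨a, rfl⟩ := Multiset.card_eq_one.1 h₁
      simp_all
    · obtain ⟨a, b, rfl⟩ := Multiset.card_eq_two.1 h₁
      simp_all

end ZeroSums

namespace EtaA

variable {ι : Type*} [DecidableEq ι] {J K L : Finset ι}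

def ind (J : Finset ι) : ι → ZMod 3 := fun i => if i ∈ J then 1 else 0

def sgn (K : Finset ι) : ι → ZMod 3 := fun i => if i ∈ K then -1 else 1

theorem ind_injective : Function.Injective (ind (ι := ι)) := by
  intro J K h
  ext i
  have := congrFun h i
  simp only [ind] at this
  split_ifs at this <;> simp_all +decide

theorem sgn_injective : Function.Injective (sgn (ι := ι)) := by
  intro J K h
  ext i
  have := congrFun h i
  simp only [sgn] at this
  split_ifs at this <;> simp_all +decide

theorem sgn_compl [Fintype ι] (K : Finset ι) : sgn Kᶜ = -sgn K := by
  ext i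
  by_cases hi : i ∈ K <;> simp [sgn, hi]

theorem eq_empty_of_ind_eq_zero (h : ind J = 0) : J = ∅ := by
  ext i
  have := congrFun h i
  simp only [ind, Pi.zero_apply] at this
  split_ifs at this <;> simp_all +decide

theorem sgn_ne_zero [Nonempty ι] (K : Finset ι) : sgn K ≠ 0 := by
  intro h
  have := congrFun h (Classical.arbitrary ι)
  simp only [sgn, Pi.zero_apply] at this
  split_ifs at this <;> simp_all +decide

theorem eq_univ_of_ind_eq_sgn [Fintype ι] (h : ind J = sgn K) : J = univ := by
  ext i
  have := congrFun h i
  simp only [ind, sgn] at this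
  split_ifs at this <;> simp_all +decide

theorem eq_empty_of_ind_add_ind_eq_zero (h : ind J + ind K = 0) : J = ∅ := by
  ext i
  have := congrFun h i
  simp only [ind, Pi.add_apply, Pi.zero_apply] at this
  split_ifs at this <;> simp_all +decide

theorem eq_of_ind_add_ind_add_ind_eq_zero (h : ind J + ind K + ind L = 0) : J = K := by
  ext i
  have := congrFun h i
  simp only [ind, Pi.add_apply, Pi.zero_apply] at this
  split_ifs at this <;> simp_all +decide

theorem eq_of_sgn_add_sgn_add_sgn_eq_zero (h : sgn J + sgn K + sgn L = 0) : J = K := by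
  ext i
  have := congrFun h i
  simp only [sgn, Pi.add_apply, Pi.zero_apply] at this
  split_ifs at this <;> simp_all +decide

theorem eq_of_ind_add_sgn_eq_ind (h : ind J + sgn K = ind L) : J = K := by
  ext i
  have := congrFun h i
  simp only [ind, sgn, Pi.add_apply] at this
  split_ifs at this <;> simp_all +decide

theorem card_add_card_of_ind_add_ind_eq_ind (h : ind J + ind K = ind L) :
    #J + #K = #L := by
  have hi (i : ι) : ¬ (i ∈ J ∧ i ∈ K) ∧ (i ∈ J ∨ i ∈ K ↔ i ∈ L) := by
    have := congrFun h i
    simp only [ind, Pi.add_apply] at this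
    split_ifs at this <;> simp_all +decide
  have hdisj : Disjoint J K := disjoint_left.2 fun i hJ hK => (hi i).1 ⟨hJ, hK⟩
  have hL : J ∪ K = L := ext fun i => by simpa using (hi i).2
  rw [← card_union_of_disjoint hdisj, hL]

theorem card_add_card_add_card_of_ind_add_ind_add_sgn_eq_zero [Fintype ι]
    (h : ind J + ind K + sgn L = 0) : #J + #K + #L = 2 * Fintype.card ι := by
  have hi (i : ι) : (i ∈ J ∨ i ∈ K) ∧ (i ∈ J ∧ i ∈ K ↔ i ∉ L) := by
    have := congrFun h i
    simp only [ind, sgn, Pi.add_apply, Pi.zero_apply] at this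
    split_ifs at this <;> simp_all +decide
  have hunion : J ∪ K = univ := eq_univ_of_forall fun i => mem_union.2 (hi i).1
  have hinter : J ∩ K = Lᶜ := ext fun i => by simpa using (hi i).2
  rw [← card_union_add_card_inter, hunion, hinter, card_univ, add_assoc, card_compl_add_card,
    two_mul]

theorem card_add_card_add_card_of_ind_add_sgn_add_sgn_eq_zero [Fintype ι]
    (h : ind J + sgn K + sgn L = 0) : #J + #K + #L = Fintype.card ι := by
  have hi (i : ι) : ¬ (i ∈ K ∧ i ∈ L) ∧ (i ∈ J ↔ ¬ (i ∈ K ∨ i ∈ L)) := by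
    have := congrFun h i
    simp only [ind, sgn, Pi.add_apply, Pi.zero_apply] at this
    split_ifs at this <;> simp_all +decide
  have hdisj : Disjoint K L := disjoint_left.2 fun i hK hL => (hi i).1 ⟨hK, hL⟩
  have hJ : J = (K ∪ L)ᶜ := ext fun i => by simpa using (hi i).2
  rw [add_assoc, ← card_union_of_disjoint hdisj, hJ, card_compl_add_card]

variable [Fintype ι]

def oddSetsUpTo (m : ℕ) : Finset (Finset ι) := univ.filter fun J => Odd #J ∧ #J ≤ m

def extremalSet (m : ℕ) (F : Finset (Finset ι)) : Finset (ι → ZMod 3) :=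
  (oddSetsUpTo m).image ind ∪ F.image sgn

structure Admissible (m d : ℕ) (F : Finset (Finset ι)) : Prop where
  even_card : Even (Fintype.card ι)
  even_d : Even d
  two_mul_d_le : 2 * d ≤ Fintype.card ι
  two_mul_m_lt : 2 * m < Fintype.card ι + d
  card_eq : ∀ K ∈ F, #K = d
  compl_notMem : ∀ K ∈ F, Kᶜ ∉ F

variable {m d : ℕ} {F : Finset (Finset ι)} {x y z : ι → ZMod 3}

theorem mem_extremalSet :
    x ∈ extremalSet m F ↔ (∃ J, (Odd #J ∧ #J ≤ m) ∧ ind J = x) ∨ ∃ K ∈ F, sgn K = x := by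
  simp [extremalSet, oddSetsUpTo]

theorem ne_zero_of_mem_extremalSet [Nonempty ι] (hx : x ∈ extremalSet m F) : x ≠ 0 := by
  rcases mem_extremalSet.1 hx with ⟨J, ⟨hJ, -⟩, rfl⟩ | ⟨K, -, rfl⟩
  · intro h
    simp [eq_empty_of_ind_eq_zero h] at hJ
  · exact sgn_ne_zero K

theorem Admissible.add_ne_zero (hA : Admissible m d F) (hx : x ∈ extremalSet m F)
    (hy : y ∈ extremalSet m F) : x + y ≠ 0 := by
  have hind_sgn (J K : Finset ι) (hJ : Odd #J) : ind J + sgn K ≠ 0 := fun h => by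
    have hJ_univ : J = univ :=
      eq_univ_of_ind_eq_sgn (K := Kᶜ) (by rw [sgn_compl]; exact eq_neg_of_add_eq_zero_left h)
    rw [hJ_univ, card_univ] at hJ
    exact Nat.not_odd_iff_even.2 hA.even_card hJ
  rcases mem_extremalSet.1 hx with ⟨J, ⟨hJ, -⟩, rfl⟩ | ⟨J, hJ, rfl⟩ <;>
    rcases mem_extremalSet.1 hy with ⟨K, ⟨hK, -⟩, rfl⟩ | ⟨K, hK, rfl⟩
  · intro h
    simp [eq_empty_of_ind_add_ind_eq_zero h] at hJ
  · exact hind_sgn J K hJ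
  · rw [add_comm]
    exact hind_sgn K J hK
  · intro h
    have hKJ : K = Jᶜ := sgn_injective (by rw [sgn_compl]; exact eq_neg_of_add_eq_zero_right h)
    exact hA.compl_notMem J hJ (hKJ ▸ hK)

theorem Admissible.add_add_ne_zero (hA : Admissible m d F) (hx : x ∈ extremalSet m F)
    (hy : y ∈ extremalSet m F) (hz : z ∈ extremalSet m F) (hxy : x ≠ y) : x + y + z ≠ 0 := by
  have h_ind_ind_sgn (J K L : Finset ι) (hJ : #J ≤ m) (hK : #K ≤ m) (hL : L ∈ F) :
      ind J + ind K + sgn L ≠ 0 := fun h => by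
    have := card_add_card_add_card_of_ind_add_ind_add_sgn_eq_zero h
    have := hA.card_eq L hL
    have := hA.two_mul_d_le
    have := hA.two_mul_m_lt
    omega
  have h_ind_sgn_sgn (J K L : Finset ι) (hJ : Odd #J) (hK : K ∈ F) (hL : L ∈ F) :
      ind J + sgn K + sgn L ≠ 0 := fun h => by
    have := card_add_card_add_card_of_ind_add_sgn_add_sgn_eq_zero h
    rw [hA.card_eq K hK, hA.card_eq L hL] at this
    obtain ⟨a, ha⟩ := hJ
    obtain ⟨b, hb⟩ := hA.even_card
    omega
  rcases mem_extremalSet.1 hx with ⟨J, ⟨hJo, hJm⟩, rfl⟩ | ⟨J, hJ, rfl⟩ <;>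
    rcases mem_extremalSet.1 hy with ⟨K, ⟨hKo, hKm⟩, rfl⟩ | ⟨K, hK, rfl⟩ <;>
    rcases mem_extremalSet.1 hz with ⟨L, ⟨hLo, hLm⟩, rfl⟩ | ⟨L, hL, rfl⟩ <;> intro h
  · exact hxy (congrArg ind (eq_of_ind_add_ind_add_ind_eq_zero h))
  · exact h_ind_ind_sgn J K L hJm hKm hL h
  · exact h_ind_ind_sgn J L K hJm hLm hK (by linear_combination h)
  · exact h_ind_sgn_sgn J K L hJo hK hL h
  · exact h_ind_ind_sgn K L J hKm hLm hJ (by linear_combination h)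
  · exact h_ind_sgn_sgn K J L hKo hJ hL (by linear_combination h)
  · exact h_ind_sgn_sgn L J K hLo hJ hK (by linear_combination h)
  · exact hxy (congrArg sgn (eq_of_sgn_add_sgn_add_sgn_eq_zero h))

theorem Admissible.add_ne (hA : Admissible m d F) (hx : x ∈ extremalSet m F)
    (hy : y ∈ extremalSet m F) (hz : z ∈ extremalSet m F) (hxy : x ≠ y) : x + y ≠ z := by
  have hcompl (L : Finset ι) (hL : L ∈ F) : #Lᶜ = Fintype.card ι - d := by
    rw [card_compl, hA.card_eq L hL]
  have h_ind_sgn_ind (J K L : Finset ι) (hJ : Odd #J) (hK : K ∈ F) :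
      ind J + sgn K ≠ ind L := fun h => by
    rw [eq_of_ind_add_sgn_eq_ind h, hA.card_eq K hK] at hJ
    exact Nat.not_odd_iff_even.2 hA.even_d hJ
  have h_ind_sgn_sgn (J K L : Finset ι) (hJ : Odd #J) (hK : K ∈ F) (hL : L ∈ F) :
      ind J + sgn K ≠ sgn L := fun h => by
    have := card_add_card_add_card_of_ind_add_sgn_add_sgn_eq_zero (K := K) (L := Lᶜ)
      (J := J) (by rw [sgn_compl, h, add_neg_cancel])
    have := hcompl L hL
    have := hA.card_eq K hK
    have := hA.two_mul_d_le
    obtain ⟨a, ha⟩ := hJ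
    omega
  rcases mem_extremalSet.1 hx with ⟨J, ⟨hJo, hJm⟩, rfl⟩ | ⟨J, hJ, rfl⟩ <;>
    rcases mem_extremalSet.1 hy with ⟨K, ⟨hKo, hKm⟩, rfl⟩ | ⟨K, hK, rfl⟩ <;>
    rcases mem_extremalSet.1 hz with ⟨L, ⟨hLo, hLm⟩, rfl⟩ | ⟨L, hL, rfl⟩ <;> intro h
  · have := card_add_card_of_ind_add_ind_eq_ind h
    obtain ⟨a, ha⟩ := hJo
    obtain ⟨b, hb⟩ := hKo
    obtain ⟨c, hc⟩ := hLo
    omega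
  · have := card_add_card_add_card_of_ind_add_ind_add_sgn_eq_zero (L := Lᶜ)
      (by rw [sgn_compl, h, add_neg_cancel])
    have := hcompl L hL
    have := hA.two_mul_d_le
    have := hA.two_mul_m_lt
    omega
  · exact h_ind_sgn_ind J K L hJo hK h
  · exact h_ind_sgn_sgn J K L hJo hK hL h
  · exact h_ind_sgn_ind K J L hKo hJ (by rwa [add_comm])
  · exact h_ind_sgn_sgn K J L hKo hJ hL (by rwa [add_comm])
  · have := card_add_card_add_card_of_ind_add_sgn_add_sgn_eq_zero (J := L) (K := Jᶜ) (L := Kᶜ)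
      (by rw [sgn_compl, sgn_compl, ← h]; abel)
    have := hcompl J hJ
    have := hcompl K hK
    have := hA.two_mul_d_le
    obtain ⟨a, ha⟩ := hLo
    omega
  · exact hxy (congrArg sgn (eq_of_sgn_add_sgn_add_sgn_eq_zero (L := Lᶜ)
      (by rw [sgn_compl, h, add_neg_cancel])))

theorem Admissible.not_hasWZSS [Nonempty ι] (hA : Admissible m d F) {k : ℕ} (hk : 1 ≤ k)
    (hk3 : k ≤ 3) : ¬ HasWZSS (extremalSet m F).val k :=
  not_hasWZSS_of_forall (fun _ hx => ne_zero_of_mem_extremalSet hx)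
    (fun _ hx _ hy _ => hA.add_ne_zero hx hy) (fun _ hx _ hy _ hz => hA.add_add_ne_zero hx hy hz)
    (fun _ hx _ hy _ hz => hA.add_ne hx hy hz) hk hk3

theorem card_extremalSet (hι : Even (Fintype.card ι)) :
    #(extremalSet m F) = #(oddSetsUpTo m : Finset (Finset ι)) + #F := by
  rw [extremalSet, card_union_of_disjoint, card_image_of_injective _ ind_injective,
    card_image_of_injective _ sgn_injective]
  refine disjoint_left.2 fun x hx hx' => ?_
  obtain ⟨J, hJ, rfl⟩ := mem_image.1 hx
  obtain ⟨K, -, hK⟩ := mem_image.1 hx'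
  have hJ_univ := eq_univ_of_ind_eq_sgn hK.symm
  simp only [oddSetsUpTo, mem_filter, hJ_univ, card_univ] at hJ
  exact Nat.not_odd_iff_even.2 hι hJ.2.1

theorem Admissible.card_add_card_add_one_le_etaA [Nonempty ι] (hA : Admissible m d F) :
    #(oddSetsUpTo m : Finset (Finset ι)) + #F + 1 ≤ etaA (ι → ZMod 3) := by
  rw [← card_extremalSet hA.even_card]
  refine card_add_one_le_etaA _ fun k hk hk3 => hA.not_hasWZSS hk ?_
  rwa [AddMonoid.exponent_pi_zmod] at hk3

omit [DecidableEq ι] in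
theorem card_oddSetsUpTo (m : ℕ) :
    #(oddSetsUpTo m : Finset (Finset ι)) =
      ∑ j ∈ (Icc 1 m).filter Odd, (Fintype.card ι).choose j := by
  rw [card_eq_sum_card_fiberwise (f := card) (t := (Icc 1 m).filter Odd)]
  · refine sum_congr rfl fun j hj => ?_
    simp only [mem_filter, mem_Icc] at hj
    rw [← card_univ, ← card_powersetCard]
    congr 1
    ext J
    simp only [oddSetsUpTo, mem_filter, mem_univ, true_and, mem_powersetCard, subset_univ]
    constructor
    · exact fun h => h.2
    · rintro rfl
      exact ⟨⟨hj.2, hj.1.2⟩, rfl⟩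
  · intro J hJ
    obtain ⟨hodd, hle⟩ := (mem_filter.1 (mem_coe.1 hJ)).2
    exact mem_filter.2 ⟨mem_Icc.2 ⟨hodd.pos, hle⟩, hodd⟩

theorem admissible_powersetCard (hι : Even (Fintype.card ι)) (hd : Even d)
    (hdι : 2 * d < Fintype.card ι) (hm : 2 * m < Fintype.card ι + d) :
    Admissible m d (powersetCard d (univ : Finset ι)) where
  even_card := hι
  even_d := hd
  two_mul_d_le := hdι.le
  two_mul_m_lt := hm
  card_eq K hK := (mem_powersetCard.1 hK).2
  compl_notMem K hK hKc := by
    rw [mem_powersetCard, card_compl, (mem_powersetCard.1 hK).2] at hKc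
    omega

theorem admissible_filter_mem_powersetCard (i₀ : ι) (hd : Even d)
    (hdι : 2 * d = Fintype.card ι) (hm : 2 * m < Fintype.card ι + d) :
    Admissible m d ((powersetCard d univ).filter (i₀ ∈ ·)) where
  even_card := ⟨d, by omega⟩
  even_d := hd
  two_mul_d_le := hdι.le
  two_mul_m_lt := hm
  card_eq K hK := (mem_powersetCard.1 (mem_filter.1 hK).1).2
  compl_notMem K hK hKc := (mem_compl.1 (mem_filter.1 hKc).2) (mem_filter.1 hK).2

end EtaA

open EtaA in
/-- Proposition 5: for even `r > 4`, with `m = ⌊(3r-4)/4⌋` and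
`ℓ(r) = C(r, (r-2)/2)` if `r ≡ 2 (mod 4)`, `ℓ(r) = C(r, r/2)/2` if `r ≡ 0 (mod 4)`,
`η_A(C_3^r) ≥ Σ_{1 ≤ j ≤ m, j odd} C(r,j) + ℓ(r) + 1`. -/
theorem etaA_lower_even (r : ℕ) (hr : 4 < r) (heven : Even r) :
    (∑ j ∈ (Finset.Icc 1 ((3 * r - 4) / 4)).filter (fun j => Odd j), Nat.choose r j)
      + (if r % 4 = 2 then Nat.choose r ((r - 2) / 2) else Nat.choose r (r / 2) / 2)
      + 1 ≤ etaA (Fin r → ZMod 3) := by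
  set m := (3 * r - 4) / 4
  have hm : 4 * m ≤ 3 * r - 4 := Nat.mul_div_le _ _
  have : Nonempty (Fin r) := ⟨⟨0, by omega⟩⟩
  have hr2 : r % 2 = 0 := Nat.even_iff.1 heven
  split_ifs with hr4
  · have hA := admissible_powersetCard (ι := Fin r) (m := m) (d := (r - 2) / 2)
      (by simpa using heven) (Nat.even_iff.2 (by omega)) (by simp; omega) (by simp; omega)
    simpa [card_oddSetsUpTo] using hA.card_add_card_add_one_le_etaA
  · have hA := admissible_filter_mem_powersetCard (m := m) (⟨0, by omega⟩ : Fin r) (d := r / 2)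
      (Nat.even_iff.2 (by omega)) (by simp; omega) (by simp; omega)
    have hhalf := two_mul_card_filter_mem_powersetCard_univ (⟨0, by omega⟩ : Fin r)
      (d := r / 2) (by simp; omega)
    have key := hA.card_add_card_add_one_le_etaA
    simp only [card_oddSetsUpTo, Fintype.card_fin] at key hhalf
    convert key using 3
    omega
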